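/- arXiv:2012.02844 — 3 statements merged into one kernel-verified Lean document; each statement's English description precedes it below -/
import Mathlib

section
/- Let δ = n^{−(1/3+ε)} for a fixed constant ε > 0. There exist constants c and n0 such that for all n ≥ n0, setting N = ⌈c·log n⌉: for every x ∈ {0,1}^n, if z^1,…,z^N are independent traces drawn from Del_δ(x) and w = BMA(n, z^1,…,z^N), then (1) if x has no desert, Pr[w = x] ≥ 1 − 1/n²; and (2) if x has at least one desert, letting r be the first location of x that is deep in a desert, Pr[w_{[0:r+m]} = x_{[0:r+m]}] ≥ 1 − 1/n². -/
/-!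
Call a deletion pattern good if every trace loses at most `C` bits in any window of length
`L = 2CM + 2C + 2`, and at every time `t` fewer than half of the traces lose a bit of
`x_{[t-R:t]}`, where `R = 2CM`. On a good pattern BMA outputs `x_t` as long as no run of
length `M` before `t` has a period at most `C`: inductively, every trace is synced with `x` at
some time in the last `R` steps, so the traces that lost no bit since then read `x_t`, and they
form a majority. Deserts are exactly such periodic runs. By union bounds a pattern is bad with
probability at most `n (N L δ)^(C+1) + n (N L δ)^(N/2)`, and `N L δ ≤ n^(-ε/4)` once
`N = ⌈(32/ε) log n⌉`.
-/

open scoped Classical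

namespace TraceRec

/-- The subword `x_{[a:b]} = (x_a, …, x_b)` of a string. -/
def subword (x : List Bool) (a b : ℕ) : List Bool := (x.drop a).take (b + 1 - a)

/-- The trace of `x` obtained by deleting the coordinates in the deletion set `D`. -/
def trace (x : List Bool) (D : Finset ℕ) : List Bool :=
  ((List.range x.length).filter (fun i => decide (i ∉ D))).map (fun i => x.getD i false)

/-- Probability weight of the deletion set `D` for an `n`-bit string at deletion rate `δ`:
each of the `n` coordinates is deleted independently with probability `δ`. -/
noncomputable def delWeight (δ : ℝ) (n : ℕ) (D : Finset ℕ) : ℝ :=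
  δ ^ D.card * (1 - δ) ^ (n - D.card)

/-- Probability, over `N` independent deletion sets for an `n`-bit string, of event `P`. -/
noncomputable def prSets (δ : ℝ) (n N : ℕ) (P : (Fin N → Finset ℕ) → Prop) : ℝ :=
  ∑ Ds ∈ Fintype.piFinset (fun _ : Fin N => (Finset.range n).powerset),
    (∏ i, delWeight δ n (Ds i)) * (if P Ds then 1 else 0)

/-- Probability of event `P` over `N` independent traces of `x` drawn from `Del_δ(x)`. -/
noncomputable def prTraces (δ : ℝ) (x : List Bool) (N : ℕ)
    (P : (Fin N → List Bool) → Prop) : ℝ :=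
  prSets δ x.length N (fun Ds => P (fun i => trace x (Ds i)))

/-- Probability of event `P` over one trace of `x` drawn from `Del_δ(x)`. -/
noncomputable def prOne (δ : ℝ) (x : List Bool) (P : List Bool → Prop) : ℝ :=
  prTraces δ x 1 (fun ys => P (ys 0))

/-- The set of all binary strings of length `n`. -/
def binStrings (n : ℕ) : Finset (List Bool) :=
  Finset.image (fun f : Fin n → Bool => List.ofFn f) Finset.univ

/-- Majority bit of `N` bits. -/
def majority (N : ℕ) (b : Fin N → Bool) : Bool :=
  decide (N ≤ 2 * (Finset.univ.filter (fun i => b i = true)).card)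

/-- Padding of a trace with `0`s (`false`) at the end. -/
def pad (z : List Bool) : ℕ → Bool := fun j => z.getD j false

/-- The pointers `current_i(t)` in the Bitwise Majority Alignment algorithm. -/
def bmaCur (N : ℕ) (u : Fin N → ℕ → Bool) : ℕ → Fin N → ℕ
  | 0 => fun _ => 0
  | t + 1 => fun i =>
      let c := bmaCur N u t
      if u i (c i) = majority N (fun j => u j (c j)) then c i + 1 else c i

/-- The bit `w_t` output by BMA at round `t`. -/
def bmaBit (N : ℕ) (u : Fin N → ℕ → Bool) (t : ℕ) : Bool :=
  majority N (fun j => u j (bmaCur N u t j))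

/-- The Bitwise Majority Alignment algorithm on `N` traces, run for `n'` rounds. -/
def BMA (n' N : ℕ) (z : Fin N → List Bool) : List Bool :=
  (List.range n').map (fun t => bmaBit N (fun i => pad (z i)) t)

/-- `fmap D j`: the original position of the `j`-th surviving bit under deletion set `D`,
i.e. the unique `k ∉ D` with `k - |D ∩ [0:k-1]| = j`. -/
noncomputable def fmap (D : Finset ℕ) (j : ℕ) : ℕ := Nat.nth (fun k => k ∉ D) j

/-- `position_i(t) = f_i(current_i(t))` in the run of BMA. -/
noncomputable def positionOf {R : ℕ} (z : Fin R → List Bool) (D : Fin R → Finset ℕ)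
    (t : ℕ) (i : Fin R) : ℕ :=
  fmap (D i) (bmaCur R (fun i => pad (z i)) t i)

/-- `distance_i(t) = position_i(t) - t` in the run of BMA. -/
noncomputable def distOf {R : ℕ} (z : Fin R → List Bool) (D : Fin R → Finset ℕ)
    (t : ℕ) (i : Fin R) : ℤ :=
  (positionOf z D t i : ℤ) - t

/-- `z` is a prefix of the infinite periodic string `s^∞`. -/
def periodicPrefix (s z : List Bool) : Prop :=
  ∀ j < z.length, z.getD j false = s.getD (j % s.length) false

/-- `z` is an `s`-desert for some nonempty `s` of length at most `C`
(with desert length threshold `M`). -/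
def isDesert (C M : ℕ) (z : List Bool) : Prop :=
  ∃ s : List Bool, s ≠ [] ∧ s.length ≤ C ∧ M ≤ z.length ∧ periodicPrefix s z

/-- Location `i` of `x` is deep in a desert: `x_{[i-m:i+m]}` is a desert. -/
def deepInDesert (C m : ℕ) (x : List Bool) (i : ℕ) : Prop :=
  m ≤ i ∧ isDesert C (2 * m + 1) (subword x (i - m) (i + m))

/-- `x` has a desert: some subword of `x` is a desert. -/
def hasDesert (C M : ℕ) (x : List Bool) : Prop :=
  ∃ a b, isDesert C M (subword x a b)

/-- `r` is the first location of `x` that is deep in a desert. -/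
def firstDeep (C m : ℕ) (x : List Bool) (r : ℕ) : Prop :=
  deepInDesert C m x r ∧ ∀ i < r, ¬ deepInDesert C m x i

/-- The deletion rate `δ = n^{-(1/3+ε)}`. -/
noncomputable def delta (ε : ℝ) (n : ℕ) : ℝ := (n : ℝ) ^ (-(1/3 + ε))

/-- `C = ⌈100/ε⌉`. -/
noncomputable def Cp (ε : ℝ) : ℕ := ⌈(100 : ℝ) / ε⌉₊

/-- `m = ⌈n^{1/3}⌉`. -/
noncomputable def mp (n : ℕ) : ℕ := ⌈(n : ℝ) ^ ((1 : ℝ) / 3)⌉₊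

/-- `M = 2m + 1`. -/
noncomputable def Mp (n : ℕ) : ℕ := 2 * mp n + 1

/-- `σ = ⌈√(δn)·log n⌉`. -/
noncomputable def sigp (ε : ℝ) (n : ℕ) : ℕ :=
  ⌈Real.sqrt (delta ε n * n) * Real.log n⌉₊

/-- A family of deletion sets (for traces of an `n'`-bit string) is good. -/
def goodFam (C M n' : ℕ) {R : ℕ} (D : Fin R → Finset ℕ) : Prop :=
  (∀ i : Fin R, ∀ a, a + 2 * C ^ 2 * M ≤ n' →
      (D i ∩ Finset.Ico a (a + 2 * C ^ 2 * M)).card ≤ C) ∧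
  (∀ a, a + (M + C + 1) ≤ n' →
      ((Finset.univ.filter
          (fun i : Fin R => (D i ∩ Finset.Ico a (a + (M + C + 1))).Nonempty)).card : ℝ)
        ≤ (R : ℝ) / (C : ℝ) ^ 3)

/-- Two tuples of strings are `η`-close as multisets: one is obtained from the other by
substituting at most `ηN` of its strings. -/
def closeTuples (η : ℝ) {N : ℕ} (z z' : Fin N → List Bool) : Prop :=
  ∃ π : Equiv.Perm (Fin N),
    ((Finset.univ.filter (fun i => z i ≠ z' (π i))).card : ℝ) ≤ η * N

/-- `s` is a minimal-length pattern for the desert `x_{[r-m:r+m]}` around location `r`. -/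
def minimalPattern (C m : ℕ) (x : List Bool) (r : ℕ) (s : List Bool) : Prop :=
  s ≠ [] ∧ s.length ≤ C ∧ periodicPrefix s (subword x (r - m) (r + m)) ∧
    ∀ s' : List Bool, s' ≠ [] → periodicPrefix s' (subword x (r - m) (r + m)) →
      s.length ≤ s'.length

/-- `e` is the end position of the desert containing `x_r` (for pattern length `k`):
the smallest integer `≥ r + m` such that `x_{e+1} ≠ x_{e+1-k}`. -/
def isEnd (x : List Bool) (r m k e : ℕ) : Prop :=
  r + m ≤ e ∧ x.getD (e + 1) false ≠ x.getD (e + 1 - k) false ∧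
    ∀ j, r + m ≤ j → j < e → x.getD (j + 1) false = x.getD (j + 1 - k) false

/-- The tail string `tail = x_{[end-k+2 : end-k+8σ+1]}` of the desert. -/
def tailStr (x : List Bool) (k e σ : ℕ) : List Bool :=
  subword x (e - k + 2) (e - k + 8 * σ + 1)

/-- `last(y)` for the trace of `x` with deletion set `D`: the position in the trace of the
last surviving bit of `x_{[0:e]}`, or `-1` if all of `x_{[0:e]}` is deleted. -/
def lastPos (D : Finset ℕ) (e : ℕ) : ℤ :=
  (((Finset.range (e + 1)).filter (fun i => decide (i ∉ D))).card : ℤ) - 1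

/-- `w ∈ Cyc_s`: `w` is a cyclic shift of `s`. -/
def inCyc (s w : List Bool) : Prop := ∃ j, w = s.rotate j

/-- `sig` is the signature of the desert of `x` with pattern `s` ending at `e`. -/
def isSig (x s : List Bool) (e σ : ℕ) (sig : List Bool) : Prop :=
  (∃ d, e + s.length + 1 ≤ d ∧ d ≤ e + 8 * σ - s.length + 1 ∧
      ¬ inCyc s (subword x (d + 1 - s.length) d) ∧
      (∀ d', e + s.length + 1 ≤ d' → d' < d → inCyc s (subword x (d' + 1 - s.length) d')) ∧
      sig = subword x (e - s.length + 2) d) ∨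
  ((∀ d, e + s.length + 1 ≤ d → d ≤ e + 8 * σ - s.length + 1 →
      inCyc s (subword x (d + 1 - s.length) d)) ∧
    sig = tailStr x s.length e σ)

/-- A string `z` is in the right form `w ∘ sig`, where the leftmost `k`-bit subword of `z`
not in `Cyc_s` consists of the first `k` bits of the trailing occurrence of `sig`. -/
def rightForm (s sig z : List Bool) : Prop :=
  ∃ w : List Bool, z = w ++ sig ∧
    ∀ a < w.length, inCyc s ((z.drop a).take s.length)

open Finset

section DeletionMap

variable (D : Finset ℕ)

lemma infinite_setOf_notMem : {k : ℕ | k ∉ D}.Infinite := D.finite_toSet.infinite_compl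

lemma fmap_strictMono : StrictMono (fmap D) := Nat.nth_strictMono (infinite_setOf_notMem D)

lemma fmap_notMem (j : ℕ) : fmap D j ∉ D := Nat.nth_mem_of_infinite (infinite_setOf_notMem D) j

lemma count_fmap (j : ℕ) : Nat.count (· ∉ D) (fmap D j) = j :=
  Nat.count_nth_of_infinite (infinite_setOf_notMem D) j

lemma le_fmap_count (a : ℕ) : a ≤ fmap D (Nat.count (· ∉ D) a) :=
  Nat.le_nth_count (infinite_setOf_notMem D) a

lemma card_inter_Ico_add {a b c : ℕ} (hab : a ≤ b) (hbc : b ≤ c) :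
    #(D ∩ Ico a c) = #(D ∩ Ico a b) + #(D ∩ Ico b c) := by
  rw [← Ico_union_Ico_eq_Ico hab hbc, inter_union_distrib_left, card_union_of_disjoint
    ((Ico_disjoint_Ico_consecutive a b c).mono inter_subset_right inter_subset_right)]

lemma count_notMem_add_card (k : ℕ) : Nat.count (· ∉ D) k + #(D ∩ range k) = k := by
  rw [Nat.count_eq_card_filter_range, inter_comm, ← filter_mem_eq_inter, add_comm,
    card_filter_add_card_filter_not, card_range]

lemma fmap_add_count {a c : ℕ} (ha : a ≤ fmap D c) :
    fmap D c + Nat.count (· ∉ D) a = a + c + #(D ∩ Ico a (fmap D c)) := by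
  have hc := count_notMem_add_card D (fmap D c)
  have ha' := count_notMem_add_card D a
  rw [count_fmap] at hc
  rw [range_eq_Ico, card_inter_Ico_add D (Nat.zero_le a) ha, ← range_eq_Ico] at hc
  omega

lemma fmap_count_le {a q : ℕ} (hq : q ∉ D) (haq : a ≤ q) :
    fmap D (Nat.count (· ∉ D) a) ≤ q :=
  calc fmap D (Nat.count (· ∉ D) a) ≤ fmap D (Nat.count (· ∉ D) q) :=
        (fmap_strictMono D).monotone (Nat.count_monotone _ haq)
    _ = q := Nat.nth_count hq

lemma fmap_succ_le {c q : ℕ} (hq : q ∉ D) (hcq : fmap D c < q) : fmap D (c + 1) ≤ q := by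
  simpa [Nat.count_succ, count_fmap, fmap_notMem] using fmap_count_le D hq hcq

lemma fmap_succ_eq {c : ℕ} (h : fmap D c + 1 ∉ D) : fmap D (c + 1) = fmap D c + 1 :=
  le_antisymm (fmap_succ_le D h (Nat.lt_succ_self _)) (fmap_strictMono D (Nat.lt_succ_self c))

lemma filter_range_eq_map_fmap (n : ℕ) :
    (List.range n).filter (fun i => decide (i ∉ D))
      = (List.range (Nat.count (· ∉ D) n)).map (fmap D) := by
  induction n with
  | zero => simp
  | succ n ih =>
    rw [List.range_succ, List.filter_append, ih, Nat.count_succ]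
    by_cases hn : n ∈ D
    · simp [hn]
    · simp [hn, List.range_succ, fmap, Nat.nth_count (p := (· ∉ D)) hn]

lemma pad_trace (x : List Bool) (j : ℕ) :
    pad (trace x D) j = pad x (fmap D j) := by
  rw [pad, pad, trace, filter_range_eq_map_fmap, List.map_map]
  by_cases hj : j < Nat.count (· ∉ D) x.length
  · simp [List.getD_eq_getElem?_getD, hj]
  · have hlen : x.length ≤ fmap D j :=
      (Nat.count_le_iff_le_nth (infinite_setOf_notMem D)).1 (not_lt.1 hj)
    rw [List.getD_eq_default _ _ (by simpa using not_lt.1 hj), List.getD_eq_default _ _ hlen]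

end DeletionMap

lemma majority_eq_of_card_compl_lt {N : ℕ} (b : Fin N → Bool) (c : Bool) (S : Finset (Fin N))
    (hS : ∀ i ∈ S, b i = c) (h : 2 * #Sᶜ < N) : majority N b = c := by
  have hcard : #S + #Sᶜ = N := by rw [card_add_card_compl, Fintype.card_fin]
  unfold majority
  cases c with
  | true =>
    have : S ⊆ univ.filter (fun i => b i = true) := fun i hi => mem_filter.2 ⟨mem_univ i, hS i hi⟩
    have := card_le_card this
    exact decide_eq_true (by omega)
  | false =>
    have : univ.filter (fun i => b i = true) ⊆ Sᶜ := fun i hi => mem_compl.2 fun hiS => by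
      simp [hS i hiS] at hi
    have := card_le_card this
    exact decide_eq_false (by omega)

lemma le_card_of_forall_exists_mem_Ico {S : Finset ℕ} {s M k : ℕ}
    (h : ∀ b < k, ∃ v ∈ S, s + b * M ≤ v ∧ v < s + (b + 1) * M) : k ≤ #S := by
  have := card_le_card_of_surjOn (fun v => (v - s) / M) (s := S) (t := range k) fun b hb => by
    obtain ⟨v, hv, h1, h2⟩ := h b (mem_range.1 hb)
    exact ⟨v, hv, Nat.div_eq_of_lt_le (by omega) (by omega)⟩
  simpa using this

lemma exists_notMem_of_card_inter_lt {s : Finset ℕ} {a k : ℕ} (h : #(s ∩ Ico a (a + k)) < k) :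
    ∃ q, a ≤ q ∧ q < a + k ∧ q ∉ s := by
  by_contra! hall
  have : Ico a (a + k) ⊆ s ∩ Ico a (a + k) := fun q hq =>
    mem_inter.2 ⟨hall q (mem_Ico.1 hq).1 (mem_Ico.1 hq).2, hq⟩
  have := card_le_card this
  simp only [Nat.card_Ico, Nat.add_sub_cancel_left] at this
  omega

def NoPeriodicRun (C M B : ℕ) (x : List Bool) : Prop :=
  ∀ j, 0 < j → j ≤ C → ∀ a, a + M < B → ∃ v, a ≤ v ∧ v < a + M ∧ pad x (v + j) ≠ pad x v

def FewDeletions {N : ℕ} (C L : ℕ) (D : Fin N → Finset ℕ) : Prop :=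
  ∀ i a, #(D i ∩ Ico a (a + L)) ≤ C

def MostlyIntact {N : ℕ} (R B : ℕ) (D : Fin N → Finset ℕ) : Prop :=
  ∀ t < B, 2 * #{i | (D i ∩ Ico (t - R) (t + 1)).Nonempty} < N

section Run

variable (x : List Bool) {N : ℕ} (D : Fin N → Finset ℕ)

def pointer (t : ℕ) (i : Fin N) : ℕ := bmaCur N (fun i => pad (trace x (D i))) t i

def output (t : ℕ) : Bool := bmaBit N (fun i => pad (trace x (D i))) t

noncomputable def position (t : ℕ) (i : Fin N) : ℕ := positionOf (fun i => trace x (D i)) D t i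

lemma position_def (t : ℕ) (i : Fin N) : position x D t i = fmap (D i) (pointer x D t i) := rfl

lemma pad_trace_pointer (t : ℕ) (i : Fin N) :
    pad (trace x (D i)) (pointer x D t i) = pad x (position x D t i) :=
  pad_trace _ _ _

lemma output_eq_majority (t : ℕ) :
    output x D t = majority N (fun i => pad x (position x D t i)) := by
  simp only [← pad_trace_pointer]
  rfl

lemma pointer_zero (i : Fin N) : pointer x D 0 i = 0 := rfl

lemma pointer_succ (t : ℕ) (i : Fin N) :
    pointer x D (t + 1) i =
      if pad x (position x D t i) = output x D t then pointer x D t i + 1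
      else pointer x D t i := by
  rw [← pad_trace_pointer]
  rfl

lemma pointer_le_succ (t : ℕ) (i : Fin N) : pointer x D t i ≤ pointer x D (t + 1) i := by
  rw [pointer_succ]; split <;> omega

lemma pointer_succ_le (t : ℕ) (i : Fin N) : pointer x D (t + 1) i ≤ pointer x D t i + 1 := by
  rw [pointer_succ]; split <;> omega

lemma pointer_mono (i : Fin N) : Monotone (pointer x D · i) :=
  monotone_nat_of_le_succ (pointer_le_succ x D · i)

lemma position_mono (i : Fin N) : Monotone (position x D · i) :=
  (fmap_strictMono (D i)).monotone.comp (pointer_mono x D i)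

def IsStall (i : Fin N) (v : ℕ) : Prop := pointer x D (v + 1) i = pointer x D v i

def IsSkip (i : Fin N) (v : ℕ) : Prop := position x D v i + 2 ≤ position x D (v + 1) i

/-- The pointer of trace `i` at time `a` has consumed exactly the surviving bits of
`x_{[0:a-1]}`. -/
def IsSynced (i : Fin N) (a : ℕ) : Prop := pointer x D a i = Nat.count (· ∉ D i) a

variable {x D}

lemma pointer_succ_of_not_isStall {i : Fin N} {v : ℕ} (h : ¬ IsStall x D i v) :
    pointer x D (v + 1) i = pointer x D v i + 1 ∧ pad x (position x D v i) = output x D v := by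
  unfold IsStall at h
  rw [pointer_succ] at h ⊢
  split_ifs at h ⊢ with hv
  · exact ⟨rfl, hv⟩
  · exact absurd rfl h

lemma position_succ_of_not_isStall {i : Fin N} {v : ℕ} (h : ¬ IsStall x D i v) :
    position x D v i < position x D (v + 1) i := by
  simp only [position_def, (pointer_succ_of_not_isStall h).1]
  exact fmap_strictMono _ (Nat.lt_succ_self _)

lemma position_succ_of_clean {i : Fin N} {v : ℕ} (hst : ¬ IsStall x D i v)
    (hsk : ¬ IsSkip x D i v) : position x D (v + 1) i = position x D v i + 1 := by
  have := position_succ_of_not_isStall hst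
  unfold IsSkip at hsk
  omega

lemma card_stalls_add_pointer (i : Fin N) {a b : ℕ} (hab : a ≤ b) :
    #{v ∈ Ico a b | IsStall x D i v} + pointer x D b i = pointer x D a i + (b - a) := by
  induction b, hab using Nat.le_induction with
  | base => simp
  | succ b hab ih =>
    rw [Nat.Ico_succ_right_eq_insert_Ico hab, filter_insert]
    have h1 := pointer_le_succ x D b i
    have h2 := pointer_succ_le x D b i
    split_ifs with hst
    · rw [card_insert_of_notMem (by simp)]
      unfold IsStall at hst
      omega
    · have : pointer x D (b + 1) i = pointer x D b i + 1 := by unfold IsStall at hst; omega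
      omega

lemma add_one_mem_of_isSkip {i : Fin N} {v : ℕ} (h : IsSkip x D i v) :
    position x D v i + 1 ∈ D i := by
  have hst : ¬ IsStall x D i v := fun hst => by
    unfold IsSkip at h; unfold IsStall at hst
    rw [position_def, position_def, hst] at h; omega
  by_contra hmem
  unfold IsSkip at h
  rw [position_def, position_def, (pointer_succ_of_not_isStall hst).1,
    fmap_succ_eq (D i) (c := pointer x D v i) hmem] at h
  omega

lemma card_skips_le (i : Fin N) (a b : ℕ) :
    #{v ∈ Ico a b | IsSkip x D i v} ≤ #(D i ∩ Ico (position x D a i) (position x D b i)) := by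
  refine card_le_card_of_injOn (fun v => position x D v i + 1) (fun v hv => ?_) ?_
  · simp only [coe_filter, mem_Ico, Set.mem_ofPred_eq] at hv
    have h1 : position x D a i ≤ position x D v i := position_mono x D i hv.1.1
    have h2 : position x D (v + 1) i ≤ position x D b i := position_mono x D i (by omega)
    unfold IsSkip at hv
    simp only [coe_inter, coe_Ico, Set.mem_inter_iff, mem_coe, Set.mem_Ico]
    exact ⟨add_one_mem_of_isSkip hv.2, by omega, by omega⟩
  · intro v hv w hw hvw
    simp only [coe_filter, Set.mem_ofPred_eq] at hv hw
    by_contra hne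
    rcases Nat.lt_or_gt_of_ne hne with h | h
    · have : position x D (v + 1) i ≤ position x D w i := position_mono x D i (by omega)
      unfold IsSkip at hv; simp only at hvw; omega
    · have : position x D (w + 1) i ≤ position x D v i := position_mono x D i (by omega)
      unfold IsSkip at hw; simp only at hvw; omega

lemma isSynced_zero (i : Fin N) : IsSynced x D i 0 := by
  simp [IsSynced, pointer_zero]

lemma isSynced_of_position_eq {i : Fin N} {a : ℕ} (h : position x D a i = a) :
    IsSynced x D i a := by
  have := count_fmap (D i) (pointer x D a i)
  rwa [← position_def, h, eq_comm] at this

lemma le_position_of_isSynced {i : Fin N} {a : ℕ} (h : IsSynced x D i a) :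
    a ≤ position x D a i := by
  rw [position_def, h]
  exact le_fmap_count _ a

lemma position_eq_of_isSynced {i : Fin N} {a : ℕ} (h : IsSynced x D i a) (ha : a ∉ D i) :
    position x D a i = a := by
  rw [position_def, h]
  exact Nat.nth_count ha

lemma position_add_card_stalls {i : Fin N} {a v : ℕ} (h : IsSynced x D i a) (hav : a ≤ v) :
    position x D v i + #{w ∈ Ico a v | IsStall x D i w}
      = v + #(D i ∩ Ico a (position x D v i)) := by
  have hpos : a ≤ position x D v i :=
    (le_position_of_isSynced h).trans (position_mono x D i hav)
  have h1 := fmap_add_count (D i) (c := pointer x D v i) hpos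
  have h2 := card_stalls_add_pointer (x := x) (D := D) i hav
  rw [← position_def, ← h] at h1
  omega

lemma not_isStall_of_position_eq {i : Fin N} {t : ℕ} (hpos : position x D t i = t)
    (hout : output x D t = pad x t) : ¬ IsStall x D i t := by
  unfold IsStall
  rw [pointer_succ, if_pos (by rw [hpos, hout])]
  omega

lemma le_position {t : ℕ} (hcorrect : ∀ s < t, output x D s = pad x s) (i : Fin N) :
    t ≤ position x D t i := by
  induction t with
  | zero => exact Nat.zero_le _
  | succ t ih =>
    rcases (ih fun s hs => hcorrect s (by omega)).lt_or_eq with hlt | heq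
    · exact hlt.trans_le (position_mono x D i (Nat.le_succ t))
    · have := position_succ_of_not_isStall
        (not_isStall_of_position_eq heq.symm (hcorrect t (Nat.lt_succ_self t)))
      omega

lemma position_eq_of_isSynced_of_notMem {i : Fin N} {a t : ℕ} (hsync : IsSynced x D i a)
    (hat : a ≤ t) (hD : ∀ q, a ≤ q → q ≤ t → q ∉ D i)
    (hcorrect : ∀ s, a ≤ s → s < t → output x D s = pad x s) : position x D t i = t := by
  induction t, hat using Nat.le_induction with
  | base => exact position_eq_of_isSynced hsync (hD a le_rfl le_rfl)
  | succ t hat ih =>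
    have hpt := ih (fun q h1 h2 => hD q h1 (by omega)) (fun s h1 h2 => hcorrect s h1 (by omega))
    have hst := not_isStall_of_position_eq hpt (hcorrect t hat (Nat.lt_succ_self t))
    have hnext : fmap (D i) (pointer x D t i) + 1 ∉ D i := by
      rw [← position_def, hpt]
      exact hD (t + 1) (by omega) le_rfl
    rw [position_def, (pointer_succ_of_not_isStall hst).1, fmap_succ_eq _ hnext, ← position_def,
      hpt]

lemma output_eq_pad_of_isSynced {R t : ℕ}
    (hintact : 2 * #{i | (D i ∩ Ico (t - R) (t + 1)).Nonempty} < N)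
    (hcorrect : ∀ s < t, output x D s = pad x s)
    (hsync : ∀ i, ∃ a, a ≤ t ∧ t ≤ a + R ∧ IsSynced x D i a) : output x D t = pad x t := by
  rw [output_eq_majority]
  refine majority_eq_of_card_compl_lt _ _ {i | ¬ (D i ∩ Ico (t - R) (t + 1)).Nonempty}
    (fun i hi => ?_) (by rw [compl_filter]; simpa only [not_not] using hintact)
  obtain ⟨a, hat, hta, ha⟩ := hsync i
  have hD : ∀ q, a ≤ q → q ≤ t → q ∉ D i := fun q h1 h2 hq =>
    (mem_filter.1 hi).2 ⟨q, mem_inter.2 ⟨hq, mem_Ico.2 ⟨by omega, by omega⟩⟩⟩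
  rw [position_eq_of_isSynced_of_notMem ha hat hD fun s _ hs => hcorrect s hs]

lemma position_succ_le (t : ℕ) (i : Fin N) :
    position x D (t + 1) i ≤ fmap (D i) (pointer x D t i + 1) :=
  (fmap_strictMono (D i)).monotone (pointer_succ_le x D t i)

lemma position_lt_of_isSynced {C L R : ℕ} (hsparse : FewDeletions C L D)
    (hRL : R + 2 * C + 2 ≤ L) {i : Fin N} {a v : ℕ} (hsync : IsSynced x D i a) (hav : a ≤ v)
    (hvR : v ≤ a + R + 1) : position x D v i < a + L := by
  induction v, hav using Nat.le_induction with
  | base =>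
    obtain ⟨q, hq, hqC, hqD⟩ := exists_notMem_of_card_inter_lt (s := D i) (a := a) (k := C + 1)
      ((card_le_card (inter_subset_inter_left (Ico_subset_Ico_right (by omega)))).trans_lt
        ((hsparse i a).trans_lt (Nat.lt_succ_self C)))
    rw [position_def, hsync]
    exact (fmap_count_le _ hqD hq).trans_lt (by omega)
  | succ v hav ih =>
    have ih := ih (by omega)
    have hdel : #(D i ∩ Ico a (position x D v i)) ≤ C :=
      (card_le_card (inter_subset_inter_left (Ico_subset_Ico_right ih.le))).trans (hsparse i a)
    have hpos := position_add_card_stalls hsync hav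
    set p := position x D v i
    obtain ⟨q, hq, hqC, hqD⟩ := exists_notMem_of_card_inter_lt (s := D i) (a := p + 1)
      (k := C + 1) ((card_le_card (inter_subset_inter_left
        (Ico_subset_Ico_right (by omega)))).trans_lt ((hsparse i (p + 1)).trans_lt C.lt_succ_self))
    have := (position_succ_le v i).trans (fmap_succ_le (D i) hqD (show p < q by omega))
    omega

lemma card_inter_Ico_position_le {C L R : ℕ} (hsparse : FewDeletions C L D)
    (hRL : R + 2 * C + 2 ≤ L) {i : Fin N} {a v : ℕ} (hsync : IsSynced x D i a) (hav : a ≤ v)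
    (hvR : v ≤ a + R + 1) : #(D i ∩ Ico a (position x D v i)) ≤ C :=
  (card_le_card (inter_subset_inter_left (Ico_subset_Ico_right
    (position_lt_of_isSynced hsparse hRL hsync hav hvR).le))).trans (hsparse i a)

lemma exists_stall_or_skip {C M B : ℕ} (hx : NoPeriodicRun C M B x) {i : Fin N} {s : ℕ}
    (hlt : s < position x D s i) (hle : position x D s i ≤ s + C) (hB : s + M < B)
    (hcorrect : ∀ v, s ≤ v → v < s + M → output x D v = pad x v) :
    ∃ v, s ≤ v ∧ v < s + M ∧ (IsStall x D i v ∨ IsSkip x D i v) := by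
  by_contra! hclean
  have hpos : ∀ k < M, position x D (s + k) i = position x D s i + k := by
    intro k hk
    induction k with
    | zero => rfl
    | succ k ih =>
      obtain ⟨hst, hsk⟩ := hclean (s + k) (by omega) (by omega)
      rw [← add_assoc, position_succ_of_clean hst hsk, ih (by omega), add_assoc]
  obtain ⟨v, hsv, hvM, hne⟩ := hx (position x D s i - s) (by omega) (by omega) s hB
  apply hne
  have hread := (pointer_succ_of_not_isStall (hclean v hsv hvM).1).2
  rw [← hcorrect v hsv hvM, ← hread]
  have := hpos (v - s) (by omega)
  rw [Nat.add_sub_cancel' hsv] at this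
  rw [this]
  congr 1
  omega

/-- While the trace stays misaligned, each of `2C` blocks of `M` consecutive steps contains a
stall or a skip (otherwise the block is a periodic run with the trace's offset as period), but
the at most `C` deletions in the window allow fewer than `C` stalls and at most `C` skips. -/
lemma exists_position_eq_of_isSynced {C L M R B : ℕ} (hsparse : FewDeletions C L D)
    (hRL : R + 2 * C + 2 ≤ L) (hRM : 2 * C * M ≤ R) (hx : NoPeriodicRun C M B x) {i : Fin N}
    {a : ℕ} (hsync : IsSynced x D i a) (hB : a + R + 1 < B)
    (hcorrect : ∀ s < a + R + 1, output x D s = pad x s) :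
    ∃ v, a < v ∧ v ≤ a + R + 1 ∧ position x D v i = v := by
  by_contra! hmis
  set T := a + R + 1
  have hlt : ∀ v, a < v → v ≤ T → v < position x D v i := fun v hav hvT =>
    (le_position (fun s hs => hcorrect s (by omega)) i).lt_of_ne (hmis v hav hvT).symm
  have hdel : ∀ v, a ≤ v → v ≤ T → #(D i ∩ Ico a (position x D v i)) ≤ C :=
    fun v hav hvT => card_inter_Ico_position_le hsparse hRL hsync hav hvT
  have hfew : #{v ∈ Ico a T | IsStall x D i v ∨ IsSkip x D i v} < 2 * C := by
    have hstall := position_add_card_stalls hsync (show a ≤ T by omega)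
    have hskip := (card_skips_le (x := x) i a T).trans (card_le_card (inter_subset_inter_left
      (Ico_subset_Ico_left (le_position_of_isSynced hsync))))
    have := card_union_le {v ∈ Ico a T | IsStall x D i v} {v ∈ Ico a T | IsSkip x D i v}
    rw [← filter_or] at this
    have := hlt T (by omega) le_rfl
    have := hdel T (by omega) le_rfl
    omega
  have hblocks : ∀ b < 2 * C, ∃ v ∈ {v ∈ Ico a T | IsStall x D i v ∨ IsSkip x D i v},
      a + 1 + b * M ≤ v ∧ v < a + 1 + (b + 1) * M := by
    intro b hb
    have hbM : (b + 1) * M ≤ R := (Nat.mul_le_mul_right M hb).trans hRM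
    set s := a + 1 + b * M
    have hsM : s + M ≤ T := by rw [add_one_mul] at hbM; omega
    have hle : position x D s i ≤ s + C := by
      have := position_add_card_stalls hsync (show a ≤ s by omega)
      have := hdel s (by omega) (by omega)
      omega
    obtain ⟨v, hsv, hvM, hv⟩ := exists_stall_or_skip hx (hlt s (by omega) (by omega)) hle
      (by omega) fun v _ hv => hcorrect v (by omega)
    exact ⟨v, mem_filter.2 ⟨mem_Ico.2 ⟨by omega, by omega⟩, hv⟩, hsv, by rw [add_one_mul]; omega⟩
  have := le_card_of_forall_exists_mem_Ico hblocks
  omega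

lemma exists_isSynced {C L M R B : ℕ} (hsparse : FewDeletions C L D) (hRL : R + 2 * C + 2 ≤ L)
    (hRM : 2 * C * M ≤ R) (hx : NoPeriodicRun C M B x) {t : ℕ} (htB : t < B)
    (hcorrect : ∀ s < t, output x D s = pad x s) (i : Fin N) :
    ∃ a, a ≤ t ∧ t ≤ a + R ∧ IsSynced x D i a := by
  induction t with
  | zero => exact ⟨0, le_rfl, Nat.zero_le _, isSynced_zero i⟩
  | succ t ih =>
    obtain ⟨a, hat, hta, ha⟩ := ih (by omega) fun s hs => hcorrect s (by omega)
    by_cases hR : t + 1 ≤ a + R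
    · exact ⟨a, by omega, hR, ha⟩
    · obtain ⟨v, hav, hvt, hv⟩ := exists_position_eq_of_isSynced hsparse hRL hRM hx ha
        (by omega) fun s hs => hcorrect s (by omega)
      exact ⟨v, by omega, by omega, isSynced_of_position_eq hv⟩

theorem output_eq_pad {C L M R B : ℕ} (hsparse : FewDeletions C L D)
    (hintact : MostlyIntact R B D) (hRL : R + 2 * C + 2 ≤ L) (hRM : 2 * C * M ≤ R)
    (hx : NoPeriodicRun C M B x) {t : ℕ} (ht : t < B) : output x D t = pad x t := by
  induction t using Nat.strong_induction_on with
  | _ t ih =>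
    have hcorrect : ∀ s < t, output x D s = pad x s := fun s hs => ih s hs (hs.trans ht)
    exact output_eq_pad_of_isSynced (hintact t ht) hcorrect
      (exists_isSynced hsparse hRL hRM hx ht hcorrect)

end Run

section Deserts

lemma length_subword (x : List Bool) (a b : ℕ) :
    (subword x a b).length = min (b + 1 - a) (x.length - a) := by
  rw [subword, List.length_take, List.length_drop]

lemma getD_subword (x : List Bool) {a b k : ℕ} (hk : k < b + 1 - a) :
    (subword x a b).getD k false = pad x (a + k) := by
  rw [subword, pad, List.getD_eq_getElem?_getD, List.getD_eq_getElem?_getD,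
    List.getElem?_take, if_pos hk, List.getElem?_drop]

lemma pad_add_mod_eq {x : List Bool} {a j M : ℕ} (hj : 0 < j)
    (hper : ∀ v, a ≤ v → v < a + M → pad x (v + j) = pad x v) {k : ℕ} (hk : k < M) :
    pad x (a + k) = pad x (a + k % j) := by
  induction k using Nat.strong_induction_on with
  | _ k ih =>
    rcases Nat.lt_or_ge k j with hkj | hkj
    · rw [Nat.mod_eq_of_lt hkj]
    · have := hper (a + (k - j)) (by omega) (by omega)
      rw [show a + (k - j) + j = a + k by omega] at this
      rw [this, ih (k - j) (by omega) (by omega), ← Nat.add_mod_right (k - j) j,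
        Nat.sub_add_cancel hkj]

lemma isDesert_subword_of_periodic {C M j a b : ℕ} (x : List Bool) (hj : 0 < j) (hjC : j ≤ C)
    (hjM : j ≤ M) (hab : b + 1 = a + M) (hlen : a + M ≤ x.length)
    (hper : ∀ v, a ≤ v → v < a + M → pad x (v + j) = pad x v) :
    isDesert C M (subword x a b) := by
  have hs : (subword x a (a + j - 1)).length = j := by rw [length_subword]; omega
  refine ⟨subword x a (a + j - 1), fun h => by simp [h] at hs; omega, by omega,
    by rw [length_subword]; omega, fun k hk => ?_⟩
  rw [length_subword] at hk
  rw [hs, getD_subword x (by omega), getD_subword x (by have := Nat.mod_lt k hj; omega)]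
  exact pad_add_mod_eq hj hper (by omega)

lemma noPeriodicRun_of_not_hasDesert {C M : ℕ} {x : List Bool} (hCM : C ≤ M)
    (h : ¬ hasDesert C M x) : NoPeriodicRun C M x.length x := by
  intro j hj hjC a haM
  by_contra! hper
  exact h ⟨a, a + M - 1,
    isDesert_subword_of_periodic x hj hjC (hjC.trans hCM) (by omega) haM.le hper⟩

lemma add_lt_length_of_deepInDesert {C m r : ℕ} {x : List Bool} (h : deepInDesert C m x r) :
    r + m < x.length := by
  obtain ⟨hmr, -, -, -, hM, -⟩ := h
  rw [length_subword] at hM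
  omega

lemma noPeriodicRun_of_firstDeep {C m r : ℕ} {x : List Bool} (hCm : C ≤ 2 * m + 1)
    (h : firstDeep C m x r) : NoPeriodicRun C (2 * m + 1) (r + m + 1) x := by
  intro j hj hjC a haM
  by_contra! hper
  have := add_lt_length_of_deepInDesert h.1
  refine h.2 (a + m) (by omega) ⟨by omega, ?_⟩
  rw [Nat.add_sub_cancel]
  exact isDesert_subword_of_periodic x hj hjC (hjC.trans hCm) (by omega) (by omega) hper

end Deserts

section Output

variable {x : List Bool} {N : ℕ} {D : Fin N → Finset ℕ}

lemma take_BMA_traces {n k : ℕ} (hn : x.length = n) (hk : k ≤ n)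
    (h : ∀ t < k, output x D t = pad x t) :
    (BMA n N fun i => trace x (D i)).take k = x.take k := by
  change ((List.range n).map (output x D)).take k = x.take k
  refine List.ext_getElem (by simp [hn]) fun t h1 h2 => ?_
  simp only [List.length_take, List.length_map, List.length_range] at h1
  simp only [List.getElem_take, List.getElem_map, List.getElem_range]
  rw [h t (by omega), pad, List.getD_eq_getElem]

lemma BMA_traces_eq {n : ℕ} (hn : x.length = n) (h : ∀ t < n, output x D t = pad x t) :
    BMA n N (fun i => trace x (D i)) = x := by
  have := take_BMA_traces hn le_rfl h
  rwa [List.take_of_length_le (by simp [BMA]), List.take_of_length_le hn.le] at this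

lemma subword_BMA_traces {n K : ℕ} (hn : x.length = n) (hK : K < n)
    (h : ∀ t ≤ K, output x D t = pad x t) :
    subword (BMA n N fun i => trace x (D i)) 0 K = subword x 0 K := by
  simpa [subword] using take_BMA_traces hn hK fun t ht => h t (by omega)

end Output

section WeightedProbability

variable {α : Type*}

noncomputable def wprob (s : Finset α) (w : α → ℝ) (P : α → Prop) : ℝ :=
  ∑ a ∈ s, w a * if P a then 1 else 0

variable {s : Finset α} {w : α → ℝ}

lemma wprob_nonneg (hw : ∀ a ∈ s, 0 ≤ w a) (P : α → Prop) : 0 ≤ wprob s w P :=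
  sum_nonneg fun a ha => mul_nonneg (hw a ha) (by split_ifs <;> norm_num)

lemma wprob_mono (hw : ∀ a ∈ s, 0 ≤ w a) {P Q : α → Prop} (h : ∀ a ∈ s, P a → Q a) :
    wprob s w P ≤ wprob s w Q :=
  sum_le_sum fun a ha => mul_le_mul_of_nonneg_left
    (by split_ifs with hP hQ <;> first | exact absurd (h a ha hP) hQ | norm_num) (hw a ha)

lemma wprob_exists_le {β : Type*} (hw : ∀ a ∈ s, 0 ≤ w a) (B : Finset β) (P : β → α → Prop) :
    wprob s w (fun a => ∃ b ∈ B, P b a) ≤ ∑ b ∈ B, wprob s w (P b) := by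
  simp only [wprob]
  rw [sum_comm]
  refine sum_le_sum fun a ha => ?_
  rw [← mul_sum, sum_boole]
  refine mul_le_mul_of_nonneg_left ?_ (hw a ha)
  split_ifs with h
  · obtain ⟨b, hb, hPb⟩ := h
    exact_mod_cast card_pos.2 ⟨b, mem_filter.2 ⟨hb, hPb⟩⟩
  · positivity

lemma wprob_or_le (hw : ∀ a ∈ s, 0 ≤ w a) (P Q : α → Prop) :
    wprob s w (fun a => P a ∨ Q a) ≤ wprob s w P + wprob s w Q := by
  rw [wprob, wprob, wprob, ← sum_add_distrib]
  refine sum_le_sum fun a ha => ?_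
  rw [← mul_add]
  refine mul_le_mul_of_nonneg_left ?_ (hw a ha)
  split_ifs <;> first | tauto | norm_num

lemma wprob_add_wprob_not (P : α → Prop) :
    wprob s w P + wprob s w (fun a => ¬ P a) = ∑ a ∈ s, w a := by
  rw [wprob, wprob, ← sum_add_distrib]
  exact sum_congr rfl fun a _ => by split_ifs <;> simp_all

end WeightedProbability

section DeletionModel

variable {δ : ℝ} {n N : ℕ}

noncomputable def prSet (δ : ℝ) (n : ℕ) (P : Finset ℕ → Prop) : ℝ :=
  wprob (range n).powerset (delWeight δ n) P

lemma prSets_eq_wprob (P : (Fin N → Finset ℕ) → Prop) :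
    prSets δ n N P = wprob (Fintype.piFinset fun _ => (range n).powerset)
      (fun Ds => ∏ i, delWeight δ n (Ds i)) P := rfl

lemma delWeight_nonneg (hδ0 : 0 ≤ δ) (hδ1 : δ ≤ 1) (D : Finset ℕ) : 0 ≤ delWeight δ n D :=
  mul_nonneg (pow_nonneg hδ0 _) (pow_nonneg (sub_nonneg.2 hδ1) _)

lemma prod_delWeight_nonneg (hδ0 : 0 ≤ δ) (hδ1 : δ ≤ 1) :
    ∀ Ds ∈ Fintype.piFinset fun _ : Fin N => (range n).powerset, 0 ≤ ∏ i, delWeight δ n (Ds i) :=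
  fun Ds _ => prod_nonneg fun i _ => delWeight_nonneg hδ0 hδ1 (Ds i)

lemma sum_delWeight : ∑ D ∈ (range n).powerset, delWeight δ n D = 1 := by
  simpa [delWeight] using sum_pow_mul_eq_add_pow δ (1 - δ) (range n)

lemma prSets_add_prSets_not (P : (Fin N → Finset ℕ) → Prop) :
    prSets δ n N P + prSets δ n N (fun Ds => ¬ P Ds) = 1 := by
  rw [prSets_eq_wprob, prSets_eq_wprob, wprob_add_wprob_not, ← prod_univ_sum]
  simp [sum_delWeight]

lemma prSet_superset (S : Finset ℕ) (hS : S ⊆ range n) : prSet δ n (S ⊆ ·) = δ ^ #S := by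
  have key := prod_add (fun _ => δ) (fun i => if i ∉ S then 1 - δ else 0) (range n)
  have hlhs : ∏ i ∈ range n, (δ + if i ∉ S then 1 - δ else 0) = δ ^ #S := by
    rw [prod_congr rfl fun i _ => show (δ + if i ∉ S then 1 - δ else 0)
      = if i ∈ S then δ else 1 by split_ifs <;> ring,
      prod_ite_mem, inter_eq_right.2 hS, prod_const]
  rw [hlhs] at key
  rw [key, prSet, wprob]
  refine sum_congr rfl fun D hD => ?_
  rw [mem_powerset] at hD
  rw [prod_const, prod_ite_zero, prod_const, card_sdiff_of_subset hD, card_range, delWeight]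
  have hiff : S ⊆ D ↔ ∀ i ∈ range n \ D, i ∉ S :=
    ⟨fun h i hi hiS => (mem_sdiff.1 hi).2 (h hiS),
      fun h i hiS => by_contra fun hiD => h i (mem_sdiff.2 ⟨hS hiS, hiD⟩) hiS⟩
  by_cases h : S ⊆ D
  · rw [if_pos h, if_pos (hiff.1 h)]; ring
  · rw [if_neg h, if_neg (mt hiff.2 h)]; ring

lemma prSet_superset_le (hδ0 : 0 ≤ δ) (S : Finset ℕ) : prSet δ n (S ⊆ ·) ≤ δ ^ #S := by
  by_cases hS : S ⊆ range n
  · exact (prSet_superset S hS).le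
  · rw [prSet, wprob]
    refine (sum_eq_zero fun D hD => ?_).trans_le (pow_nonneg hδ0 _)
    rw [if_neg fun hSD => hS (hSD.trans (mem_powerset.1 hD)), mul_zero]

lemma prSet_le_card_inter_le (hδ0 : 0 ≤ δ) (hδ1 : δ ≤ 1) (W : Finset ℕ) (k : ℕ) :
    prSet δ n (fun D => k ≤ #(D ∩ W)) ≤ (#W * δ) ^ k := by
  have hw : ∀ D ∈ (range n).powerset, 0 ≤ delWeight δ n D := fun D _ => delWeight_nonneg hδ0 hδ1 D
  calc prSet δ n (fun D => k ≤ #(D ∩ W))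
      ≤ prSet δ n (fun D => ∃ S ∈ W.powersetCard k, S ⊆ D) := wprob_mono hw fun D _ hk => by
        obtain ⟨S, hS, hSk⟩ := exists_subset_card_eq hk
        exact ⟨S, mem_powersetCard.2 ⟨hS.trans inter_subset_right, hSk⟩,
          hS.trans inter_subset_left⟩
    _ ≤ ∑ S ∈ W.powersetCard k, prSet δ n (S ⊆ ·) := wprob_exists_le hw _ _
    _ ≤ ∑ S ∈ W.powersetCard k, δ ^ k := sum_le_sum fun S hS =>
        (mem_powersetCard.1 hS).2 ▸ prSet_superset_le hδ0 S
    _ = (#W).choose k * δ ^ k := by rw [sum_const, card_powersetCard, nsmul_eq_mul]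
    _ ≤ (#W * δ) ^ k := by
        rw [mul_pow]
        gcongr
        exact_mod_cast Nat.choose_le_pow _ _

lemma prSets_forall_mem (S : Finset (Fin N)) (Q : Finset ℕ → Prop) :
    prSets δ n N (fun Ds => ∀ i ∈ S, Q (Ds i)) = prSet δ n Q ^ #S := by
  have hfactor : ∀ i : Fin N,
      ∑ D ∈ (range n).powerset, delWeight δ n D * (if i ∈ S → Q D then 1 else 0)
        = if i ∈ S then prSet δ n Q else 1 := fun i => by
    split_ifs with hi
    · simp [prSet, wprob, hi]
    · simp [hi, sum_delWeight]
  rw [prSets_eq_wprob, wprob]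
  refine (sum_congr rfl fun Ds _ =>
    (?_ : _ = ∏ i, delWeight δ n (Ds i) * (if i ∈ S → Q (Ds i) then 1 else 0))).trans ?_
  · rw [prod_mul_distrib, prod_boole]
    congr 1
    simp
  rw [← prod_univ_sum (fun _ => (range n).powerset)
    (fun i D => delWeight δ n D * if i ∈ S → Q D then 1 else 0), prod_congr rfl fun i _ =>
    hfactor i, prod_ite_mem, univ_inter, prod_const]

lemma prSets_eval (i : Fin N) (Q : Finset ℕ → Prop) :
    prSets δ n N (fun Ds => Q (Ds i)) = prSet δ n Q := by
  simpa using prSets_forall_mem (δ := δ) (n := n) {i} Q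

lemma prSets_le_card_filter_le (hδ0 : 0 ≤ δ) (hδ1 : δ ≤ 1) (Q : Finset ℕ → Prop)
    [DecidablePred Q] (h : ℕ) :
    prSets δ n N (fun Ds => h ≤ #{i | Q (Ds i)}) ≤ N.choose h * prSet δ n Q ^ h := by
  have hw := prod_delWeight_nonneg (δ := δ) (n := n) (N := N) hδ0 hδ1
  calc prSets δ n N (fun Ds => h ≤ #{i | Q (Ds i)})
      ≤ prSets δ n N
          (fun Ds => ∃ S ∈ (univ : Finset (Fin N)).powersetCard h, ∀ i ∈ S, Q (Ds i)) :=
        wprob_mono hw fun Ds _ hh => by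
          obtain ⟨S, hS, hSh⟩ := exists_subset_card_eq hh
          exact ⟨S, mem_powersetCard.2 ⟨subset_univ S, hSh⟩, fun i hi => (mem_filter.1 (hS hi)).2⟩
    _ ≤ ∑ S ∈ (univ : Finset (Fin N)).powersetCard h,
          prSets δ n N (fun Ds => ∀ i ∈ S, Q (Ds i)) :=
        wprob_exists_le hw _ _
    _ = N.choose h * prSet δ n Q ^ h := by
        rw [sum_congr rfl fun S hS => by
          rw [prSets_forall_mem, (mem_powersetCard.1 hS).2], sum_const, card_powersetCard,
          card_univ, Fintype.card_fin, nsmul_eq_mul]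

lemma prSets_not_fewDeletions_le (hδ0 : 0 ≤ δ) (hδ1 : δ ≤ 1) (C L : ℕ) :
    prSets δ n N (fun Ds => ¬ FewDeletions C L Ds) ≤ N * n * (L * δ) ^ (C + 1) := by
  have hw := prod_delWeight_nonneg (δ := δ) (n := n) (N := N) hδ0 hδ1
  calc prSets δ n N (fun Ds => ¬ FewDeletions C L Ds)
      ≤ prSets δ n N (fun Ds => ∃ p ∈ (univ : Finset (Fin N)) ×ˢ range n,
          C + 1 ≤ #(Ds p.1 ∩ Ico p.2 (p.2 + L))) := wprob_mono hw fun Ds hDs hbad => by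
        obtain ⟨i, a, ha⟩ : ∃ i a, C < #(Ds i ∩ Ico a (a + L)) := by
          simpa [FewDeletions] using hbad
        have han : a < n := by
          by_contra! han
          have : Ds i ∩ Ico a (a + L) = ∅ := eq_empty_of_forall_notMem fun q hq =>
            have := mem_range.1 (mem_powerset.1 (Fintype.mem_piFinset.1 hDs i) (mem_inter.1 hq).1)
            by simp only [mem_inter, mem_Ico] at hq; omega
          simp [this] at ha
        exact ⟨(i, a), mem_product.2 ⟨mem_univ i, mem_range.2 han⟩, ha⟩
    _ ≤ ∑ p ∈ (univ : Finset (Fin N)) ×ˢ range n,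
          prSets δ n N (fun Ds => C + 1 ≤ #(Ds p.1 ∩ Ico p.2 (p.2 + L))) :=
        wprob_exists_le hw _ _
    _ ≤ ∑ _p ∈ (univ : Finset (Fin N)) ×ˢ range n, (L * δ) ^ (C + 1) := sum_le_sum fun p _ => by
        rw [prSets_eval p.1 fun D => C + 1 ≤ #(D ∩ Ico p.2 (p.2 + L))]
        simpa using prSet_le_card_inter_le hδ0 hδ1 (Ico p.2 (p.2 + L)) (C + 1)
    _ = N * n * (L * δ) ^ (C + 1) := by simp

lemma prSets_not_mostlyIntact_le (hδ0 : 0 ≤ δ) (hδ1 : δ ≤ 1) (R : ℕ) :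
    prSets δ n N (fun Ds => ¬ MostlyIntact R n Ds)
      ≤ n * N.choose ((N + 1) / 2) * ((R + 1) * δ) ^ ((N + 1) / 2) := by
  have hw := prod_delWeight_nonneg (δ := δ) (n := n) (N := N) hδ0 hδ1
  have hhit : ∀ t, prSet δ n (fun D => (D ∩ Ico (t - R) (t + 1)).Nonempty) ≤ (R + 1) * δ :=
    fun t => calc
      _ ≤ prSet δ n (fun D => 1 ≤ #(D ∩ Ico (t - R) (t + 1))) :=
          wprob_mono (fun D _ => delWeight_nonneg hδ0 hδ1 D) fun D _ h => card_pos.2 h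
      _ ≤ (#(Ico (t - R) (t + 1)) * δ) ^ 1 := prSet_le_card_inter_le hδ0 hδ1 _ 1
      _ ≤ (R + 1) * δ := by
          rw [pow_one, Nat.card_Ico]
          gcongr
          exact_mod_cast (by omega : t + 1 - (t - R) ≤ R + 1)
  calc prSets δ n N (fun Ds => ¬ MostlyIntact R n Ds)
      ≤ prSets δ n N (fun Ds => ∃ t ∈ range n,
          (N + 1) / 2 ≤ #{i | (Ds i ∩ Ico (t - R) (t + 1)).Nonempty}) :=
        wprob_mono hw fun Ds _ hbad => by
          obtain ⟨t, ht, h⟩ : ∃ t < n, N ≤ 2 * #{i | (Ds i ∩ Ico (t - R) (t + 1)).Nonempty} := by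
            simpa [MostlyIntact] using hbad
          exact ⟨t, mem_range.2 ht, by omega⟩
    _ ≤ ∑ t ∈ range n, prSets δ n N (fun Ds =>
          (N + 1) / 2 ≤ #{i | (Ds i ∩ Ico (t - R) (t + 1)).Nonempty}) := wprob_exists_le hw _ _
    _ ≤ ∑ _t ∈ range n, N.choose ((N + 1) / 2) * ((R + 1) * δ) ^ ((N + 1) / 2) :=
        sum_le_sum fun t _ => (prSets_le_card_filter_le hδ0 hδ1
          (fun D => (D ∩ Ico (t - R) (t + 1)).Nonempty) _).trans <|
          mul_le_mul_of_nonneg_left (pow_le_pow_left₀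
            (wprob_nonneg (fun D _ => delWeight_nonneg hδ0 hδ1 D) _) (hhit t) _) (Nat.cast_nonneg _)
    _ = n * N.choose ((N + 1) / 2) * ((R + 1) * δ) ^ ((N + 1) / 2) := by
        rw [sum_const, card_range, nsmul_eq_mul, mul_assoc]

end DeletionModel

section Asymptotics

open Filter Real

lemma pow_le_one_div_pow_four {x q ε : ℝ} {k : ℕ} (hx : 1 ≤ x) (hq0 : 0 ≤ q)
    (hq : q ≤ x ^ (-(ε / 4))) (hk : 16 ≤ ε * k) : q ^ k ≤ 1 / x ^ 4 := by
  have hx0 : 0 < x := by linarith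
  calc q ^ k ≤ (x ^ (-(ε / 4))) ^ k := pow_le_pow_left₀ hq0 hq k
    _ = x ^ (-(ε / 4) * k) := by rw [← rpow_natCast, ← rpow_mul hx0.le]
    _ ≤ x ^ (-(4 : ℝ)) := rpow_le_rpow_of_exponent_le hx (by linarith)
    _ = 1 / x ^ 4 := by rw [rpow_neg hx0.le, one_div]; norm_cast

lemma mul_one_div_pow_four_add_le {x : ℝ} (hx : 2 ≤ x) :
    x * (1 / x ^ 4) + x * (1 / x ^ 4) ≤ 1 / x ^ 2 := by
  rw [show x * (1 / x ^ 4) + x * (1 / x ^ 4) = 2 / x ^ 3 by field_simp; ring,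
    div_le_div_iff₀ (by positivity) (by positivity)]
  nlinarith [mul_le_mul_of_nonneg_right hx (sq_nonneg x)]

lemma le_prSets_fewDeletions_mostlyIntact {δ ε : ℝ} {n N C L R : ℕ} (hn : 2 ≤ n) (hδ0 : 0 ≤ δ)
    (hδ1 : δ ≤ 1) (hRL : R + 1 ≤ L) (hq : N * (L * δ) ≤ (n : ℝ) ^ (-(ε / 4)))
    (hC : 16 ≤ ε * (C + 1)) (hN : 16 ≤ ε * ((N + 1) / 2 : ℕ)) :
    1 - 1 / (n : ℝ) ^ 2 ≤ prSets δ n N (fun Ds => FewDeletions C L Ds ∧ MostlyIntact R n Ds) := by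
  have hn1 : (1 : ℝ) ≤ n := by exact_mod_cast (by omega : 1 ≤ n)
  have hq0 : 0 ≤ (N : ℝ) * (L * δ) := by positivity
  have hfew : prSets δ n N (fun Ds => ¬ FewDeletions C L Ds) ≤ n * (1 / n ^ 4) := calc
    _ ≤ N * n * (L * δ) ^ (C + 1) := prSets_not_fewDeletions_le hδ0 hδ1 C L
    _ = n * (N * (L * δ) ^ (C + 1)) := by ring
    _ ≤ n * ((N : ℝ) ^ (C + 1) * (L * δ) ^ (C + 1)) := by
        gcongr
        exact_mod_cast Nat.le_self_pow (Nat.succ_ne_zero C) N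
    _ = n * (N * (L * δ)) ^ (C + 1) := by ring
    _ ≤ n * (1 / n ^ 4) := by
        gcongr
        exact pow_le_one_div_pow_four hn1 hq0 hq (by exact_mod_cast hC)
  have hintact : prSets δ n N (fun Ds => ¬ MostlyIntact R n Ds) ≤ n * (1 / n ^ 4) := calc
    _ ≤ n * N.choose ((N + 1) / 2) * ((R + 1) * δ) ^ ((N + 1) / 2) :=
        prSets_not_mostlyIntact_le hδ0 hδ1 R
    _ ≤ n * ((N : ℝ) ^ ((N + 1) / 2) * (L * δ) ^ ((N + 1) / 2)) := by
        rw [mul_assoc]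
        gcongr
        · exact_mod_cast Nat.choose_le_pow N _
        · exact_mod_cast hRL
    _ = n * (N * (L * δ)) ^ ((N + 1) / 2) := by ring
    _ ≤ n * (1 / n ^ 4) := by
        gcongr
        exact pow_le_one_div_pow_four hn1 hq0 hq hN
  have hw := prod_delWeight_nonneg (δ := δ) (n := n) (N := N) hδ0 hδ1
  have hbad : prSets δ n N (fun Ds => ¬ (FewDeletions C L Ds ∧ MostlyIntact R n Ds))
      ≤ 1 / (n : ℝ) ^ 2 := calc
    _ ≤ prSets δ n N (fun Ds => ¬ FewDeletions C L Ds) + prSets δ n N (¬ MostlyIntact R n ·) :=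
        (wprob_mono hw fun Ds _ h => not_and_or.1 h).trans (wprob_or_le hw _ _)
    _ ≤ n * (1 / n ^ 4) + n * (1 / n ^ 4) := add_le_add hfew hintact
    _ ≤ 1 / (n : ℝ) ^ 2 := mul_one_div_pow_four_add_le (by exact_mod_cast hn)
  linarith [prSets_add_prSets_not (δ := δ) (n := n) (N := N)
    (fun Ds => FewDeletions C L Ds ∧ MostlyIntact R n Ds)]

lemma eventually_mul_log_add_le_rpow (a b : ℝ) {r : ℝ} (hr : 0 < r) :
    ∀ᶠ x : ℝ in atTop, a * log x + b ≤ x ^ r := by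
  have h := ((isLittleO_log_rpow_atTop hr).const_mul_left a).add
    (Asymptotics.isLittleO_const_left (c := b).2
      (Or.inr (tendsto_norm_atTop_atTop.comp (tendsto_rpow_atTop hr))))
  filter_upwards [h.bound one_pos, eventually_ge_atTop 0] with x hx hx0
  rw [one_mul, Real.norm_of_nonneg (rpow_nonneg hx0 r)] at hx
  exact (le_abs_self _).trans hx

lemma delta_nonneg (ε : ℝ) (n : ℕ) : 0 ≤ delta ε n := rpow_nonneg (Nat.cast_nonneg n) _

lemma delta_le_one {ε : ℝ} (hε : 0 < ε) {n : ℕ} (hn : 1 ≤ n) : delta ε n ≤ 1 :=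
  rpow_le_one_of_one_le_of_nonpos (by exact_mod_cast hn) (by linarith)

lemma window_mul_delta_le (ε : ℝ) {n : ℕ} (hn : 1 ≤ n) :
    ((2 * Cp ε * Mp n + 2 * Cp ε + 2 : ℕ) : ℝ) * delta ε n
      ≤ 12 * (Cp ε + 1) * (n : ℝ) ^ (-ε) := by
  have hn0 : (0 : ℝ) < n := by exact_mod_cast hn
  set u := (n : ℝ) ^ ((1 : ℝ) / 3)
  have hu : 1 ≤ u := one_le_rpow (by exact_mod_cast hn) (by norm_num)
  have hm : (mp n : ℝ) ≤ u + 1 := (Nat.ceil_lt_add_one (rpow_nonneg hn0.le _)).le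
  have hC : (0 : ℝ) ≤ Cp ε := Nat.cast_nonneg _
  have hL : ((2 * Cp ε * Mp n + 2 * Cp ε + 2 : ℕ) : ℝ) ≤ 12 * (Cp ε + 1) * u := by
    simp only [Mp]
    push_cast
    nlinarith [mul_le_mul_of_nonneg_left hm hC, mul_le_mul_of_nonneg_left hu hC]
  calc ((2 * Cp ε * Mp n + 2 * Cp ε + 2 : ℕ) : ℝ) * delta ε n
      ≤ 12 * (Cp ε + 1) * u * delta ε n := by gcongr; exact delta_nonneg ε n
    _ = 12 * (Cp ε + 1) * (n : ℝ) ^ (-ε) := by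
        rw [mul_assoc, delta, ← rpow_add hn0]
        norm_num

lemma eventually_cp_le_mp (ε : ℝ) : ∀ᶠ n : ℕ in atTop, Cp ε ≤ Mp n := by
  filter_upwards [tendsto_natCast_atTop_atTop.eventually
    ((tendsto_rpow_atTop (by norm_num : (0 : ℝ) < 1 / 3)).eventually_ge_atTop (Cp ε : ℝ))]
    with n hn
  have : Cp ε ≤ mp n := by exact_mod_cast hn.trans (Nat.le_ceil _)
  simp only [Mp]
  omega

lemma one_le_log {n : ℕ} (hn : 3 ≤ n) : 1 ≤ log n := by
  have : (3 : ℝ) ≤ n := by exact_mod_cast hn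
  exact (le_log_iff_exp_le (by linarith)).2 (exp_one_lt_d9.le.trans (by norm_num; linarith))

lemma eventually_ceil_log_mul_window_le {ε : ℝ} (hε : 0 < ε) :
    ∀ᶠ n : ℕ in atTop, (⌈32 / ε * log n⌉₊ : ℝ) *
      (((2 * Cp ε * Mp n + 2 * Cp ε + 2 : ℕ) : ℝ) * delta ε n) ≤ (n : ℝ) ^ (-(ε / 4)) := by
  set K := 12 * ((Cp ε : ℝ) + 1)
  filter_upwards [eventually_ge_atTop 3, tendsto_natCast_atTop_atTop.eventually
    (eventually_mul_log_add_le_rpow (K * (32 / ε)) K (by positivity : 0 < 3 * ε / 4))]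
    with n hn3 hgrow
  have hn0 : (0 : ℝ) < n := by exact_mod_cast (by omega : 0 < n)
  have hN : (⌈32 / ε * log n⌉₊ : ℝ) ≤ 32 / ε * log n + 1 :=
    (Nat.ceil_lt_add_one (mul_nonneg (by positivity) (log_natCast_nonneg n))).le
  calc (⌈32 / ε * log n⌉₊ : ℝ) * (((2 * Cp ε * Mp n + 2 * Cp ε + 2 : ℕ) : ℝ) * delta ε n)
      ≤ (32 / ε * log n + 1) * (K * (n : ℝ) ^ (-ε)) :=
        mul_le_mul hN (window_mul_delta_le ε (by omega))
          (mul_nonneg (Nat.cast_nonneg _) (delta_nonneg ε n)) ((Nat.cast_nonneg _).trans hN)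
    _ = (K * (32 / ε) * log n + K) * (n : ℝ) ^ (-ε) := by ring
    _ ≤ (n : ℝ) ^ (3 * ε / 4) * (n : ℝ) ^ (-ε) := by gcongr
    _ = (n : ℝ) ^ (-(ε / 4)) := by rw [← rpow_add hn0]; ring_nf

lemma sixteen_le_mul_half_ceil_log {ε : ℝ} (hε : 0 < ε) {n : ℕ} (hn : 3 ≤ n) :
    16 ≤ ε * ((⌈32 / ε * log n⌉₊ + 1) / 2 : ℕ) := by
  set N := ⌈32 / ε * log n⌉₊
  have hN : 32 / ε * log n ≤ N := Nat.le_ceil _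
  have hhalf : (N : ℝ) ≤ 2 * ((N + 1) / 2 : ℕ) := by
    exact_mod_cast (by omega : N ≤ 2 * ((N + 1) / 2))
  have hlog := one_le_log hn
  calc (16 : ℝ) = ε * (32 / ε) / 2 := by field_simp; norm_num
    _ ≤ ε * (32 / ε * log n) / 2 := by gcongr; nlinarith [(by positivity : (0 : ℝ) < 32 / ε)]
    _ ≤ ε * ((N + 1) / 2 : ℕ) := by nlinarith

lemma eventually_le_prSets_fewDeletions_mostlyIntact {ε : ℝ} (hε : 0 < ε) :
    ∀ᶠ n : ℕ in atTop, Cp ε ≤ Mp n ∧ ∀ N, N = ⌈32 / ε * log n⌉₊ →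
      1 - 1 / (n : ℝ) ^ 2 ≤ prSets (delta ε n) n N (fun Ds =>
        FewDeletions (Cp ε) (2 * Cp ε * Mp n + 2 * Cp ε + 2) Ds ∧
          MostlyIntact (2 * Cp ε * Mp n) n Ds) := by
  filter_upwards [eventually_ge_atTop 3, eventually_cp_le_mp ε,
    eventually_ceil_log_mul_window_le hε] with n hn3 hCM hwindow
  refine ⟨hCM, fun N hN => ?_⟩
  subst hN
  have hCp : 100 / ε ≤ Cp ε := Nat.le_ceil _
  have hC : 16 ≤ ε * (Cp ε + 1) := calc
    (16 : ℝ) ≤ ε * (100 / ε) := by field_simp; norm_num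
    _ ≤ ε * (Cp ε + 1) := by gcongr; linarith
  exact le_prSets_fewDeletions_mostlyIntact (by omega) (delta_nonneg ε n)
    (delta_le_one hε (by omega)) (by omega) hwindow hC (sixteen_le_mul_half_ceil_log hε hn3)

end Asymptotics

lemma length_of_mem_binStrings {n : ℕ} {x : List Bool} (hx : x ∈ binStrings n) :
    x.length = n := by
  obtain ⟨f, -, rfl⟩ := mem_image.1 hx
  simp

lemma le_prTraces_of_imp {δ p : ℝ} {x : List Bool} {n N : ℕ} (hδ0 : 0 ≤ δ) (hδ1 : δ ≤ 1)
    (hn : x.length = n) {G : (Fin N → Finset ℕ) → Prop} {P : (Fin N → List Bool) → Prop}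
    (hG : p ≤ prSets δ n N G) (h : ∀ Ds, G Ds → P fun i => trace x (Ds i)) :
    p ≤ prTraces δ x N P := by
  subst hn
  exact hG.trans (wprob_mono (prod_delWeight_nonneg hδ0 hδ1) fun Ds _ => h Ds)

/-- Theorem 2: performance guarantee of BMA on `N = O(log n)` fresh
traces at deletion rate `δ = n^{-(1/3+ε)}`. -/
theorem statement1 (ε : ℝ) (hε : 0 < ε) :
    ∃ (c : ℝ) (n0 : ℕ), ∀ n : ℕ, n0 ≤ n →
      ∀ N : ℕ, N = ⌈c * Real.log n⌉₊ →
        ∀ x ∈ binStrings n,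
          (¬ hasDesert (Cp ε) (Mp n) x →
            1 - 1 / (n : ℝ) ^ 2 ≤
              prTraces (delta ε n) x N (fun zs => BMA n N zs = x)) ∧
          (∀ r : ℕ, firstDeep (Cp ε) (mp n) x r →
            1 - 1 / (n : ℝ) ^ 2 ≤
              prTraces (delta ε n) x N (fun zs =>
                subword (BMA n N zs) 0 (r + mp n) = subword x 0 (r + mp n))) := by
  obtain ⟨n0, hn0⟩ := Filter.eventually_atTop.1
    ((eventually_le_prSets_fewDeletions_mostlyIntact hε).and (Filter.eventually_ge_atTop 1))
  refine ⟨32 / ε, n0, fun n hn N hN x hx => ?_⟩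
  obtain ⟨⟨hCM, hgood⟩, hn1⟩ := hn0 n hn
  have hlen := length_of_mem_binStrings hx
  have hprob := fun P => le_prTraces_of_imp (P := P) (delta_nonneg ε n) (delta_le_one hε hn1)
    hlen (hgood N hN)
  refine ⟨fun hnd => hprob _ fun Ds hD => BMA_traces_eq hlen fun t ht => ?_,
    fun r hr => hprob _ fun Ds hD => ?_⟩
  · have hx := noPeriodicRun_of_not_hasDesert hCM hnd
    rw [hlen] at hx
    exact output_eq_pad hD.1 hD.2 le_rfl le_rfl hx ht
  have hrn := hlen ▸ add_lt_length_of_deepInDesert hr.1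
  exact subword_BMA_traces hlen hrn fun t ht => output_eq_pad hD.1
    (fun s hs => hD.2 s (by omega)) le_rfl le_rfl (noPeriodicRun_of_firstDeep hCM hr) (by omega)

end TraceRec
end

section
/- Let x′ ∈ {0,1}^{n′}, let Z = {z^1,…,z^R} be any multiset of R traces of x′, let w be the output of BMA(n′, Z), and let t ≥ 1 be an integer such that w_{[0:t−1]} = x′_{[0:t−1]}. Then distance_i(t) ≥ 0 for all i ∈ [R]. -/
open scoped Classical

namespace TraceRec

section Aux

lemma filter_range_eq (D : Finset ℕ) (n : ℕ) :
    (List.range n).filter (fun i => decide (i ∉ D)) =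
    (List.range (Nat.count (fun k => k ∉ D) n)).map (Nat.nth (fun k => k ∉ D)) := by
  induction n with
  | zero => simp
  | succ n ih =>
    rw [List.range_succ, List.filter_append, ih, Nat.count_succ]
    by_cases h : n ∈ D
    · simp [h]
    · simp only [h, not_false_iff, if_true, decide_eq_true_eq]
      rw [List.range_succ, List.map_append]
      simp [h, Nat.nth_count (p := fun k => k ∉ D) h]

lemma infinite_notmem (D : Finset ℕ) : {k | k ∉ D}.Infinite := by
  have : {k | k ∉ D} = (↑D : Set ℕ)ᶜ := rfl
  rw [this]
  exact (D.finite_toSet).infinite_compl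

lemma trace_eq_map (x : List Bool) (D : Finset ℕ) :
    trace x D = (List.range (Nat.count (fun k => k ∉ D) x.length)).map
      (fun j => x.getD (Nat.nth (fun k => k ∉ D) j) false) := by
  rw [trace, filter_range_eq, List.map_map]
  rfl

lemma trace_length (x : List Bool) (D : Finset ℕ) :
    (trace x D).length = Nat.count (fun k => k ∉ D) x.length := by
  rw [trace_eq_map]; simp

lemma pad_trace_s7 (x : List Bool) (D : Finset ℕ) {j : ℕ}
    (hj : j < Nat.count (fun k => k ∉ D) x.length) :
    pad (trace x D) j = x.getD (Nat.nth (fun k => k ∉ D) j) false := by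
  rw [pad, trace_eq_map]
  rw [List.getD_eq_getElem (hn := by simpa using hj)]
  simp

lemma nth_lt_of_lt_count' (D : Finset ℕ) {j n : ℕ}
    (hj : j < Nat.count (fun k => k ∉ D) n) :
    Nat.nth (fun k => k ∉ D) j < n :=
  Nat.nth_lt_of_lt_count hj

lemma le_nth_of_count_le' (D : Finset ℕ) {j n : ℕ}
    (hj : Nat.count (fun k => k ∉ D) n ≤ j) :
    n ≤ Nat.nth (fun k => k ∉ D) j := by
  by_contra h
  push_neg at h
  have h1 : Nat.count (fun k => k ∉ D) (Nat.nth (fun k => k ∉ D) j) = j :=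
    Nat.count_nth_of_infinite (infinite_notmem D) j
  have h2 : (Nat.nth (fun k => k ∉ D) j) ∉ D :=
    Nat.nth_mem_of_infinite (infinite_notmem D) j
  have h3 : Nat.count (fun k => k ∉ D) (Nat.nth (fun k => k ∉ D) j + 1) = j + 1 := by
    rw [Nat.count_succ, h1, if_pos h2]
  have h4 : Nat.count (fun k => k ∉ D) (Nat.nth (fun k => k ∉ D) j + 1)
      ≤ Nat.count (fun k => k ∉ D) n := Nat.count_monotone _ h
  omega

lemma bmaCur_succ_cases (N : ℕ) (u : Fin N → ℕ → Bool) (t : ℕ) (i : Fin N) :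
    bmaCur N u (t + 1) i = bmaCur N u t i + 1 ∨ bmaCur N u (t + 1) i = bmaCur N u t i := by
  simp only [bmaCur]
  split <;> simp

lemma bmaCur_succ_of_eq (N : ℕ) (u : Fin N → ℕ → Bool) (t : ℕ) (i : Fin N)
    (h : u i (bmaCur N u t i) = majority N (fun j => u j (bmaCur N u t j))) :
    bmaCur N u (t + 1) i = bmaCur N u t i + 1 := by
  simp only [bmaCur]
  rw [if_pos h]

lemma BMA_getD (n' N : ℕ) (z : Fin N → List Bool) {t : ℕ} (ht : t < n') :
    (BMA n' N z).getD t false = bmaBit N (fun i => pad (z i)) t := by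
  rw [BMA, List.getD_eq_getElem (hn := by simpa using ht)]
  simp

lemma subword_getD (w x : List Bool) {t τ : ℕ} (h1 : 1 ≤ t)
    (hw : subword w 0 (t - 1) = subword x 0 (t - 1)) (hτ : τ < t)
    (hwl : t ≤ w.length) (hxl : t ≤ x.length) :
    w.getD τ false = x.getD τ false := by
  have htt : t - 1 + 1 - 0 = t := by omega
  rw [subword, subword, htt, List.drop_zero, List.drop_zero] at hw
  have h2 : (w.take t).getD τ false = (x.take t).getD τ false := by rw [hw]
  rwa [List.getD_eq_getElem (hn := by simp; omega), List.getD_eq_getElem (hn := by simp; omega),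
    List.getElem_take, List.getElem_take, ← List.getD_eq_getElem (hn := by omega),
    ← List.getD_eq_getElem (hn := by omega)] at h2

end Aux

/-- Corollary 10: the distances never become negative. -/
theorem statement7 (n' R : ℕ) (x' : List Bool) (hx' : x'.length = n')
    (D : Fin R → Finset ℕ) (hD : ∀ i, D i ⊆ Finset.range n')
    (z : Fin R → List Bool) (hz : ∀ i, z i = trace x' (D i))
    (t : ℕ) (ht : 1 ≤ t) (ht' : t ≤ n')
    (hw : subword (BMA n' R z) 0 (t - 1) = subword x' 0 (t - 1)) :
    ∀ i : Fin R, 0 ≤ distOf z D t i := by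
  intro i
  have hinf := infinite_notmem (D i)
  have key : ∀ τ, τ ≤ t →
      τ ≤ Nat.nth (fun k => k ∉ D i) (bmaCur R (fun j => pad (z j)) τ i) := by
    intro τ
    induction τ with
    | zero => intro _; exact Nat.zero_le _
    | succ τ ih =>
      intro hτt
      have ihτ := ih (by omega)
      rcases lt_or_eq_of_le ihτ with hlt | heq
      · rcases bmaCur_succ_cases R (fun j => pad (z j)) τ i with hc | hc
        · rw [hc]
          exact le_trans hlt ((Nat.nth_le_nth hinf).mpr (by omega))
        · rw [hc]; exact hlt
      · have hcurL : bmaCur R (fun j => pad (z j)) τ i <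
            Nat.count (fun k => k ∉ D i) x'.length := by
          by_contra hge
          push_neg at hge
          have h1 := le_nth_of_count_le' (D i) (n := x'.length) hge
          omega
        have hbit : pad (z i) (bmaCur R (fun j => pad (z j)) τ i) = x'.getD τ false := by
          rw [hz i, pad_trace_s7 x' (D i) hcurL, ← heq]
        have hwτ : bmaBit R (fun j => pad (z j)) τ = x'.getD τ false := by
          rw [← BMA_getD n' R z (t := τ) (by omega)]
          refine subword_getD _ _ ht hw (by omega) ?_ (by omega)
          rw [BMA]; simp; omega
        have hadv : bmaCur R (fun j => pad (z j)) (τ + 1) i =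
            bmaCur R (fun j => pad (z j)) τ i + 1 := by
          apply bmaCur_succ_of_eq
          rw [hbit, ← hwτ]
          rfl
        rw [hadv]
        have : Nat.nth (fun k => k ∉ D i) (bmaCur R (fun j => pad (z j)) τ i) <
            Nat.nth (fun k => k ∉ D i) (bmaCur R (fun j => pad (z j)) τ i + 1) :=
          (Nat.nth_lt_nth hinf).mpr (by omega)
        omega
  have hkey := key t le_rfl
  rw [distOf, positionOf, fmap]
  simp only [sub_nonneg]
  exact_mod_cast hkey

end TraceRec
end

section
/- Let v be a uniformly random binary string of length ⌈n/2⌉. Then the probability that v contains an s-desert for some nonempty s ∈ {0,1}^{≤C} (i.e., that v has a desert) is at most 2^{C+1} · n · 2^{−(2m+1)}; in particular this probability is n^{−ω(1)}. -/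
open scoped Classical

namespace TraceRec

/- ===== auxiliary lemmas ===== -/

open Finset in
lemma countFixed {L : ℕ} (A : Finset (Fin L)) (g : Fin L → Bool) :
    (Finset.univ.filter (fun f : Fin L → Bool => ∀ i ∈ A, f i = g i)).card
      ≤ 2 ^ (L - A.card) := by
  classical
  have hmap : ∀ f ∈ Finset.univ.filter (fun f : Fin L → Bool => ∀ i ∈ A, f i = g i),
      (fun t : {i : Fin L // i ∉ A} => f t.1) ∈
        (Finset.univ : Finset ({i : Fin L // i ∉ A} → Bool)) := fun _ _ => Finset.mem_univ _
  have hinj : Set.InjOn (fun (f : Fin L → Bool) (t : {i : Fin L // i ∉ A}) => f t.1)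
      (Finset.univ.filter (fun f : Fin L → Bool => ∀ i ∈ A, f i = g i)) := by
    intro f1 h1 f2 h2 h
    simp only [Finset.coe_filter, Set.mem_setOf_eq, Finset.mem_univ, true_and] at h1 h2
    funext i
    by_cases hi : i ∈ A
    · rw [h1 i hi, h2 i hi]
    · exact congrFun h ⟨i, hi⟩
  have := Finset.card_le_card_of_injOn _ hmap hinj
  refine this.trans ?_
  rw [Finset.card_univ, Fintype.card_fun, Fintype.card_subtype]
  have hA : (Finset.univ.filter (fun i : Fin L => i ∉ A)) = Aᶜ := by
    ext i; simp
  rw [hA, Finset.card_compl, Fintype.card_fin, Fintype.card_bool]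

lemma mem_binStrings (l : List Bool) : l ∈ binStrings l.length := by
  simp only [binStrings, Finset.mem_image]
  exact ⟨fun i => l.get i, Finset.mem_univ _, List.ofFn_get l⟩

lemma length_of_mem_binStrings_s17 {l : List Bool} {n : ℕ} (h : l ∈ binStrings n) :
    l.length = n := by
  simp only [binStrings, Finset.mem_image] at h
  obtain ⟨f, _, rfl⟩ := h
  simp

lemma card_patterns (C : ℕ) :
    ((Finset.range C).biUnion (fun k => binStrings (k + 1))).card ≤ 2 ^ (C + 1) := by
  refine le_trans Finset.card_biUnion_le ?_
  have h1 : ∀ k : ℕ, (binStrings (k + 1)).card ≤ 2 ^ (k + 1) := by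
    intro k
    calc (binStrings (k + 1)).card ≤ (Finset.univ : Finset (Fin (k + 1) → Bool)).card :=
          Finset.card_image_le
      _ = 2 ^ (k + 1) := by simp [Finset.card_univ, Fintype.card_fun]
  refine le_trans (Finset.sum_le_sum (fun k _ => h1 k)) ?_
  induction C with
  | zero => simp
  | succ C ih =>
    rw [Finset.sum_range_succ]
    have : (2:ℕ) ^ (C + 1 + 1) = 2 ^ (C + 1) + 2 ^ (C + 1) := by ring
    omega

lemma subword_getD_s17 (x : List Bool) (a b j : ℕ) (h : j < (subword x a b).length) :
    (subword x a b).getD j false = x.getD (a + j) false := by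
  have hj' : a + j < x.length := by
    simp only [subword, List.length_take, List.length_drop] at h
    omega
  rw [List.getD_eq_getElem _ _ h, List.getD_eq_getElem _ _ hj']
  simp only [subword]
  rw [List.getElem_take, List.getElem_drop]

lemma subword_length_le (x : List Bool) (a b : ℕ) :
    (subword x a b).length ≤ x.length - a := by
  simp only [subword, List.length_take, List.length_drop]
  omega

lemma count_main (C M L : ℕ) (hM : 1 ≤ M) (hML : M ≤ L) :
    ((binStrings L).filter (fun v => hasDesert C M v)).card
      ≤ 2 ^ (C + 1) * (L - M + 1) * 2 ^ (L - M) := by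
  classical
  have himg : (binStrings L).filter (fun v => hasDesert C M v)
      = ((Finset.univ : Finset (Fin L → Bool)).filter
          (fun f => hasDesert C M (List.ofFn f))).image (fun f => List.ofFn f) := by
    rw [binStrings, Finset.filter_image]
  rw [himg, Finset.card_image_of_injective _ List.ofFn_injective]
  set idx : Finset (List Bool × ℕ) :=
    ((Finset.range C).biUnion (fun k => binStrings (k + 1))) ×ˢ Finset.range (L - M + 1)
    with hidx
  set ev : List Bool × ℕ → (Fin L → Bool) → Prop :=
    fun p f => ∀ i : Fin L, p.2 ≤ i.val → i.val < p.2 + M →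
      f i = p.1.getD ((i.val - p.2) % p.1.length) false with hev
  have hsub : (Finset.univ.filter (fun f : Fin L → Bool => hasDesert C M (List.ofFn f)))
      ⊆ idx.biUnion (fun p => Finset.univ.filter (ev p)) := by
    intro f hf
    simp only [Finset.mem_filter, Finset.mem_univ, true_and] at hf
    obtain ⟨a, b, s, hs0, hsC, hlen, hper⟩ := hf
    have hxlen : (List.ofFn f).length = L := by simp
    have hzle : (subword (List.ofFn f) a b).length ≤ L - a := by
      have := subword_length_le (List.ofFn f) a b
      omega
    have haM : a + M ≤ L := by omega
    have hslen : 1 ≤ s.length := List.length_pos_iff.mpr hs0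
    refine Finset.mem_biUnion.2 ⟨(s, a), ?_, ?_⟩
    · refine Finset.mem_product.2 ⟨?_, Finset.mem_range.2 (by omega)⟩
      refine Finset.mem_biUnion.2 ⟨s.length - 1, Finset.mem_range.2 (by omega), ?_⟩
      have hs1 : s.length - 1 + 1 = s.length := by omega
      rw [hs1]; exact mem_binStrings s
    · simp only [Finset.mem_filter, Finset.mem_univ, true_and, hev]
      intro i h1 h2
      have hj : i.val - a < (subword (List.ofFn f) a b).length := by omega
      have hp := hper (i.val - a) hj
      rw [subword_getD_s17 _ _ _ _ hj] at hp
      have hia : a + (i.val - a) = i.val := by omega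
      rw [hia] at hp
      have hiL : i.val < (List.ofFn f).length := by simp [i.isLt]
      rw [List.getD_eq_getElem _ _ hiL] at hp
      rw [List.getElem_ofFn] at hp
      simpa using hp
  refine le_trans (Finset.card_le_card hsub) (le_trans Finset.card_biUnion_le ?_)
  have hone : ∀ p ∈ idx, (Finset.univ.filter (ev p)).card ≤ 2 ^ (L - M) := by
    intro p hp
    obtain ⟨hp1, hp2⟩ := Finset.mem_product.1 hp
    have ha : p.2 + M ≤ L := by
      have := Finset.mem_range.1 hp2; omega
    set A : Finset (Fin L) :=
      Finset.univ.filter (fun i : Fin L => p.2 ≤ i.val ∧ i.val < p.2 + M) with hA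
    have hAcard : M ≤ A.card := by
      have hι : ∀ j ∈ (Finset.univ : Finset (Fin M)),
          (⟨p.2 + j.val, by omega⟩ : Fin L) ∈ A := by
        intro j _
        simp only [hA, Finset.mem_filter, Finset.mem_univ, true_and]
        exact ⟨Nat.le_add_right _ _, by omega⟩
      have hinj : Set.InjOn (fun j : Fin M => (⟨p.2 + j.val, by omega⟩ : Fin L))
          (Finset.univ : Finset (Fin M)) := by
        intro j1 _ j2 _ h
        have : p.2 + j1.val = p.2 + j2.val := congrArg Fin.val h
        exact Fin.ext (by omega)
      have := Finset.card_le_card_of_injOn _ hι hinj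
      simpa using this
    have hEv : (Finset.univ.filter (ev p))
        = Finset.univ.filter (fun f : Fin L → Bool => ∀ i ∈ A,
            f i = (fun i : Fin L => p.1.getD ((i.val - p.2) % p.1.length) false) i) := by
      apply Finset.filter_congr
      intro f _
      simp only [hev, hA, Finset.mem_filter, Finset.mem_univ, true_and, eq_iff_iff]
      constructor
      · intro h i hi; exact h i hi.1 hi.2
      · intro h i h1 h2; exact h i ⟨h1, h2⟩
    rw [hEv]
    refine le_trans (countFixed A _) (Nat.pow_le_pow_right (by norm_num) (by omega))
  calc ∑ p ∈ idx, (Finset.univ.filter (ev p)).card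
      ≤ idx.card * 2 ^ (L - M) := by
        simpa using Finset.sum_le_card_nsmul idx _ _ hone
    _ ≤ 2 ^ (C + 1) * (L - M + 1) * 2 ^ (L - M) := by
        have hc : idx.card ≤ 2 ^ (C + 1) * (L - M + 1) := by
          rw [hidx, Finset.card_product, Finset.card_range]
          exact Nat.mul_le_mul_right _ (card_patterns C)
        exact Nat.mul_le_mul_right _ hc

/-- Lemma 20, Item 3: a uniformly random string of length `⌈n/2⌉`
has a desert with probability at most `2^{C+1}·n·2^{-(2m+1)}`, which is `n^{-ω(1)}`. -/
theorem statement17 (ε : ℝ) (hε : 0 < ε) :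
    (∀ n : ℕ,
      (((binStrings ((n + 1) / 2)).filter
          (fun v => hasDesert (Cp ε) (Mp n) v)).card : ℝ) / 2 ^ ((n + 1) / 2)
        ≤ 2 ^ (Cp ε + 1) * n / 2 ^ (2 * mp n + 1)) ∧
    (∀ c : ℝ, 0 < c → ∃ n0 : ℕ, ∀ n : ℕ, n0 ≤ n →
      (((binStrings ((n + 1) / 2)).filter
          (fun v => hasDesert (Cp ε) (Mp n) v)).card : ℝ) / 2 ^ ((n + 1) / 2)
        ≤ (n : ℝ) ^ (-c)) := by
  have main : ∀ n : ℕ,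
      (((binStrings ((n + 1) / 2)).filter
          (fun v => hasDesert (Cp ε) (Mp n) v)).card : ℝ) / 2 ^ ((n + 1) / 2)
        ≤ 2 ^ (Cp ε + 1) * n / 2 ^ (2 * mp n + 1) := by
    intro n
    set C := Cp ε with hC
    set L := (n + 1) / 2 with hL
    have hMdef : Mp n = 2 * mp n + 1 := rfl
    have hM1 : 1 ≤ Mp n := by rw [hMdef]; omega
    by_cases hML : Mp n ≤ L
    · have hn1 : 1 ≤ n := by
        rcases Nat.eq_zero_or_pos n with h0 | h
        · subst h0
          have hL0 : L = 0 := by simp [hL]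
          omega
        · exact h
      have hLn : L ≤ n := by omega
      have hcount := count_main C (Mp n) L hM1 hML
      have hnat : ((binStrings L).filter (fun v => hasDesert C (Mp n) v)).card * 2 ^ (Mp n)
          ≤ 2 ^ (C + 1) * n * 2 ^ L := by
        calc ((binStrings L).filter (fun v => hasDesert C (Mp n) v)).card * 2 ^ (Mp n)
            ≤ (2 ^ (C + 1) * (L - Mp n + 1) * 2 ^ (L - Mp n)) * 2 ^ (Mp n) :=
              Nat.mul_le_mul_right _ hcount
          _ = 2 ^ (C + 1) * (L - Mp n + 1) * 2 ^ L := by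
              rw [mul_assoc (2 ^ (C + 1) * (L - Mp n + 1)), ← pow_add,
                Nat.sub_add_cancel hML]
          _ ≤ 2 ^ (C + 1) * n * 2 ^ L := by
              have hle : L - Mp n + 1 ≤ n := by omega
              exact Nat.mul_le_mul_right _ (Nat.mul_le_mul_left _ hle)
      rw [div_le_div_iff₀ (by positivity) (by positivity)]
      rw [hMdef] at hnat
      exact_mod_cast hnat
    · have hempty : (binStrings L).filter (fun v => hasDesert C (Mp n) v) = ∅ := by
        rw [Finset.filter_eq_empty_iff]
        intro v hv hd
        obtain ⟨a, b, s, _, _, hlen, _⟩ := hd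
        have h1 := subword_length_le v a b
        have h2 := length_of_mem_binStrings_s17 hv
        omega
      rw [hempty]
      simp only [Finset.card_empty, Nat.cast_zero, zero_div]
      positivity
  refine ⟨main, ?_⟩
  intro c hc
  have hev1 : ∀ᶠ x : ℝ in Filter.atTop,
      (c + 1) * Real.log x ≤ Real.log 2 * x ^ ((1:ℝ)/3) := by
    have h := (isLittleO_log_rpow_atTop (r := (1:ℝ)/3) (by norm_num)).def
      (show (0:ℝ) < Real.log 2 / (c + 1) by positivity)
    filter_upwards [h, Filter.eventually_ge_atTop (1:ℝ)] with x hx hx1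
    have hlogpos : 0 ≤ Real.log x := Real.log_nonneg hx1
    have hrp : (0:ℝ) ≤ x ^ ((1:ℝ)/3) := Real.rpow_nonneg (by linarith) _
    rw [Real.norm_eq_abs, Real.norm_eq_abs, abs_of_nonneg hlogpos, abs_of_nonneg hrp] at hx
    have hc1 : (0:ℝ) < c + 1 := by linarith
    calc (c + 1) * Real.log x ≤ (c + 1) * (Real.log 2 / (c + 1) * x ^ ((1:ℝ)/3)) :=
          mul_le_mul_of_nonneg_left hx hc1.le
      _ = Real.log 2 * x ^ ((1:ℝ)/3) := by field_simp
  have hev2 : ∀ᶠ x : ℝ in Filter.atTop,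
      ((Cp ε : ℝ) + 1) ≤ x ^ ((1:ℝ)/3) :=
    (tendsto_rpow_atTop (by norm_num)).eventually_ge_atTop _
  have hevN : ∀ᶠ n : ℕ in Filter.atTop,
      ((c + 1) * Real.log n ≤ Real.log 2 * (n:ℝ) ^ ((1:ℝ)/3) ∧
        ((Cp ε : ℝ) + 1) ≤ (n:ℝ) ^ ((1:ℝ)/3)) :=
    tendsto_natCast_atTop_atTop.eventually (hev1.and hev2)
  obtain ⟨n1, hn1⟩ := Filter.eventually_atTop.1 hevN
  refine ⟨max n1 1, fun n hn => ?_⟩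
  obtain ⟨h1, h2⟩ := hn1 n (le_trans (le_max_left _ _) hn)
  have hn01 : 1 ≤ n := le_trans (le_max_right _ _) hn
  have hx0 : (0:ℝ) < n := by exact_mod_cast hn01
  refine le_trans (main n) ?_
  set K := 2 * mp n + 1 with hK
  have hlog2 : 0 ≤ Real.log 2 := Real.log_nonneg (by norm_num)
  have hmge : (n:ℝ) ^ ((1:ℝ)/3) ≤ (mp n : ℝ) := Nat.le_ceil _
  have hKge : 2 * (n:ℝ) ^ ((1:ℝ)/3) ≤ (K:ℝ) := by
    rw [hK]
    push_cast
    nlinarith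
  have hexp : Real.log 2 * ((Cp ε : ℝ) + 1) + Real.log n * (c + 1)
      ≤ Real.log 2 * K := by
    have e1 : Real.log 2 * ((Cp ε : ℝ) + 1) ≤ Real.log 2 * ((n:ℝ) ^ ((1:ℝ)/3)) :=
      mul_le_mul_of_nonneg_left h2 hlog2
    have e2 : Real.log 2 * (2 * (n:ℝ) ^ ((1:ℝ)/3)) ≤ Real.log 2 * (K:ℝ) :=
      mul_le_mul_of_nonneg_left hKge hlog2
    nlinarith
  have hkey : (2:ℝ) ^ (Cp ε + 1) * (n:ℝ) ^ (c + 1) ≤ 2 ^ K := by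
    have e2 : (2:ℝ) ^ (Cp ε + 1) = Real.exp (Real.log 2 * ((Cp ε : ℝ) + 1)) := by
      rw [← Real.rpow_natCast 2 (Cp ε + 1), Real.rpow_def_of_pos (by norm_num)]
      push_cast
      ring_nf
    have e3 : (n:ℝ) ^ (c + 1) = Real.exp (Real.log n * (c + 1)) :=
      Real.rpow_def_of_pos hx0 _
    have e4 : (2:ℝ) ^ K = Real.exp (Real.log 2 * (K:ℝ)) := by
      rw [← Real.rpow_natCast 2 K, Real.rpow_def_of_pos (by norm_num)]
    rw [e2, e3, e4, ← Real.exp_add, Real.exp_le_exp]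
    exact hexp
  rw [div_le_iff₀ (by positivity)]
  have hsplit : (n:ℝ) = (n:ℝ) ^ (c + 1) * (n:ℝ) ^ (-c) := by
    rw [← Real.rpow_add hx0]
    have : c + 1 + -c = 1 := by ring
    rw [this, Real.rpow_one]
  have h5 : (2:ℝ) ^ (Cp ε + 1) * (n:ℝ) ^ (c + 1) * (n:ℝ) ^ (-c)
      ≤ 2 ^ K * (n:ℝ) ^ (-c) :=
    mul_le_mul_of_nonneg_right hkey (Real.rpow_nonneg hx0.le _)
  have h6 : (2:ℝ) ^ (Cp ε + 1) * (n:ℝ) ^ (c + 1) * (n:ℝ) ^ (-c)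
      = 2 ^ (Cp ε + 1) * (n:ℝ) := by
    rw [mul_assoc, ← hsplit]
  linarith [h5, h6]


end TraceRec
end
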